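/- In a Banach space X whose dual X* is rotund (strictly convex), a proximinal set K is an almost sun if and only if it is convex, if and only if it is a sun. -/

import Mathlib

open Filter Topology Metric NNReal

noncomputable section

variable {X : Type*}

/-- The distance function generated by a set `K`. -/
def dK [NormedAddCommGroup X] (K : Set X) (x : X) : ℝ := Metric.infDist x K

/-- The set of nearest points (metric projection) of `z` in `K`. -/
def nearPts [NormedAddCommGroup X] (K : Set X) (z : X) : Set X :=
  {p | p ∈ K ∧ ‖z - p‖ = Metric.infDist z K}

/-- The Clarke generalized directional derivative of `h` at `x` in direction `y`. -/
def clarkeDeriv [NormedAddCommGroup X] [NormedSpace ℝ X] (h : X → ℝ) (x y : X) : ℝ :=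
  Filter.limsup (fun p : X × ℝ => (h (p.1 + p.2 • y) - h p.1) / p.2)
    ((𝓝 x) ×ˢ (𝓝[>] (0 : ℝ)))

/-- The Clarke generalized subdifferential of `h` at `x`. -/
def clarkeSubdiff [NormedAddCommGroup X] [NormedSpace ℝ X] (h : X → ℝ) (x : X) :
    Set (X →L[ℝ] ℝ) :=
  {f | ∀ y : X, f y ≤ clarkeDeriv h x y}

/-- `h` has Gâteaux derivative `f` at `x`. -/
def HasGDeriv [NormedAddCommGroup X] [NormedSpace ℝ X] (h : X → ℝ) (f : X →L[ℝ] ℝ)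
    (x : X) : Prop :=
  ∀ y : X, Tendsto (fun t : ℝ => (h (x + t • y) - h x) / t) (𝓝[≠] (0 : ℝ)) (𝓝 (f y))

/-- The subdifferential of the norm at `v`: norm-one functionals attaining the norm at `v`. -/
def normSubdiff [NormedAddCommGroup X] [NormedSpace ℝ X] (v : X) : Set (X →L[ℝ] ℝ) :=
  {f | ‖f‖ = 1 ∧ f v = ‖v‖}

/-- The norm of `X` is Gâteaux differentiable off `0`. -/
def GateauxSmoothNorm (X : Type*) [NormedAddCommGroup X] [NormedSpace ℝ X] : Prop :=
  ∀ x : X, x ≠ 0 → ∃ f : X →L[ℝ] ℝ, HasGDeriv (fun v : X => ‖v‖) f x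

/-- The norm of `X` is Fréchet differentiable off `0`. -/
def FrechetSmoothNorm (X : Type*) [NormedAddCommGroup X] [NormedSpace ℝ X] : Prop :=
  ∀ x : X, x ≠ 0 → ∃ f : X →L[ℝ] ℝ, HasFDerivAt (fun v : X => ‖v‖) f x

/-- The norm of `X` is locally uniformly rotund (LUR). -/
def LURNorm (X : Type*) [NormedAddCommGroup X] : Prop :=
  ∀ x : X, ‖x‖ = 1 → ∀ u : ℕ → X, (∀ n, ‖u n‖ = 1) →
    Tendsto (fun n => ‖u n + x‖) atTop (𝓝 (2 : ℝ)) → Tendsto u atTop (𝓝 x)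

/-- `E(K)`: points outside `K` having a nearest point in `K`. -/
def ESet [NormedAddCommGroup X] (K : Set X) : Set X :=
  {z | z ∉ K ∧ (nearPts K z).Nonempty}

/-- `E'(K)`: points outside `K` all of whose minimizing sequences in `K` converge to a
unique nearest point. -/
def EPrime [NormedAddCommGroup X] (K : Set X) : Set X :=
  {z | z ∉ K ∧ ∃ p ∈ K, ‖z - p‖ = Metric.infDist z K ∧
    ∀ k : ℕ → X, (∀ n, k n ∈ K) →
      Tendsto (fun n => ‖z - k n‖) atTop (𝓝 (Metric.infDist z K)) →
      Tendsto k atTop (𝓝 p)}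

/-- `K` is a sun at `x` with nearest point `p`. -/
def IsSunAt [NormedAddCommGroup X] [NormedSpace ℝ X] (K : Set X) (x p : X) : Prop :=
  p ∈ nearPts K x ∧ ∀ t : ℝ, 0 ≤ t → p ∈ nearPts K (x + (t / ‖x - p‖) • (x - p))

/-- `K` is an almost sun: the sun property holds on a dense subset of `X ∖ K`. -/
def AlmostSun [NormedAddCommGroup X] [NormedSpace ℝ X] (K : Set X) : Prop :=
  ∀ x : X, x ∉ K → x ∈ closure {z | z ∉ K ∧ ∃ p, IsSunAt K z p}

/-- `K` is a sun. -/
def IsSun [NormedAddCommGroup X] [NormedSpace ℝ X] (K : Set X) : Prop :=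
  ∀ x : X, x ∉ K → ∃ p, IsSunAt K x p

/-- `K` is almost proximinal: nearest points exist on a dense subset of `X ∖ K`. -/
def AlmostProximinal [NormedAddCommGroup X] (K : Set X) : Prop :=
  ∀ x : X, x ∉ K → x ∈ closure (ESet K)

/-- `K` is proximinal: every point outside `K` has a nearest point in `K`. -/
def Proximinal [NormedAddCommGroup X] (K : Set X) : Prop :=
  ∀ x : X, x ∉ K → (nearPts K x).Nonempty

/-- `K` is Chebyshev: every point outside `K` has a unique nearest point in `K`. -/
def Chebyshev [NormedAddCommGroup X] (K : Set X) : Prop :=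
  ∀ x : X, x ∉ K → ∃! p, p ∈ nearPts K x

/-- The set `E_r(K)`. -/
def Er [NormedAddCommGroup X] [NormedSpace ℝ X] (K : Set X) (r : ℝ) : Set X :=
  {x | ∃ x₀ p : X, p ∈ nearPts K x₀ ∧ r < Metric.infDist x₀ K ∧
    x = x₀ - (r / ‖x₀ - p‖) • (x₀ - p)}

/-- `h` is uniformly Gâteaux differentiable on `D` with derivative map `g`. -/
def UniformGateauxOn [NormedAddCommGroup X] [NormedSpace ℝ X]
    (h : X → ℝ) (g : X → X →L[ℝ] ℝ) (D : Set X) : Prop :=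
  ∀ ε > (0 : ℝ), ∀ y : X, ‖y‖ = 1 → ∃ δ > (0 : ℝ), ∀ x ∈ D, ∀ t : ℝ,
    t ≠ 0 → |t| < δ → |(h (x + t • y) - h x) / t - g x y| < ε

/-- `h` is uniformly Fréchet differentiable on `D` with derivative map `g`. -/
def UniformFrechetOn [NormedAddCommGroup X] [NormedSpace ℝ X]
    (h : X → ℝ) (g : X → X →L[ℝ] ℝ) (D : Set X) : Prop :=
  ∀ ε > (0 : ℝ), ∃ δ > (0 : ℝ), ∀ x ∈ D, ∀ y : X, ‖y‖ = 1 → ∀ t : ℝ,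
    t ≠ 0 → |t| < δ → |(h (x + t • y) - h x) / t - g x y| < ε

/-- The norm of `X` is uniformly Gâteaux smooth (on the unit sphere). -/
def UniformGateauxSmoothNorm (X : Type*) [NormedAddCommGroup X] [NormedSpace ℝ X] : Prop :=
  ∃ g : X → X →L[ℝ] ℝ, UniformGateauxOn (fun v : X => ‖v‖) g {x : X | ‖x‖ = 1}

/-- The norm of `X` is uniformly Fréchet smooth (on the unit sphere). -/
def UniformFrechetSmoothNorm (X : Type*) [NormedAddCommGroup X] [NormedSpace ℝ X] : Prop :=
  ∃ g : X → X →L[ℝ] ℝ, UniformFrechetOn (fun v : X => ‖v‖) g {x : X | ‖x‖ = 1}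

/-!
Convex ⇒ sun: by convexity a nearest point `p` of `x` stays a nearest point of every
`p + s • (x - p)`, `s ≥ 1`. Sun ⇒ almost sun is trivial.

Almost sun ⇒ convex: if `p` is a nearest point of a sun point `z` and `u = (z - p) / ‖z - p‖`,
then `K` misses every ball `B(p + s • u, s)`, `s ≥ ‖z - p‖`. These balls are nested, so their
union is open and convex, and separating a point `k ∈ K` from it yields a functional that
norms `u`. Since `X*` is rotund, all such functionals are positive multiples of one of them, `f`,
so `K` lies in the half-space `{f ≤ f p}`, whose distance from `z` is `‖z - p‖`. Hence `z` is
as far from `convexHull K` as from `K`, and density of the sun points puts `convexHull K`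
inside `closure K = K`.
-/

section Suns

variable [NormedAddCommGroup X]

theorem mem_nearPts_iff {K : Set X} {x p : X} :
    p ∈ nearPts K x ↔ p ∈ K ∧ ∀ k ∈ K, ‖x - p‖ ≤ ‖x - k‖ := by
  refine ⟨fun ⟨hp, hpx⟩ => ⟨hp, fun k hk => ?_⟩, fun ⟨hp, hpx⟩ => ⟨hp, ?_⟩⟩
  · rw [hpx, ← dist_eq_norm]
    exact infDist_le_dist_of_mem hk
  · refine le_antisymm ((le_infDist ⟨p, hp⟩).2 fun k hk => ?_) ?_
    · rw [dist_eq_norm]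
      exact hpx k hk
    · rw [← dist_eq_norm]
      exact infDist_le_dist_of_mem hp

variable [NormedSpace ℝ X]

theorem Convex.add_smul_mem_nearPts {K : Set X} (hK : Convex ℝ K) {x p : X}
    (hp : p ∈ nearPts K x) {s : ℝ} (hs : 1 ≤ s) : p ∈ nearPts K (p + s • (x - p)) := by
  rw [mem_nearPts_iff] at hp ⊢
  refine ⟨hp.1, fun k hk => ?_⟩
  have hs₀ : 0 < s := by linarith
  have hm : s⁻¹ • k + (1 - s⁻¹) • p ∈ K :=
    hK hk hp.1 (by positivity) (sub_nonneg.2 (inv_le_one_of_one_le₀ hs)) (by ring)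
  have hx : x - (s⁻¹ • k + (1 - s⁻¹) • p) = s⁻¹ • (p + s • (x - p) - k) := by
    match_scalars
    all_goals field_simp
    ring
  have hpk := hp.2 _ hm
  rw [hx, norm_smul, Real.norm_eq_abs, abs_of_pos (inv_pos.2 hs₀), inv_mul_eq_div,
    le_div_iff₀ hs₀] at hpk
  rw [add_sub_cancel_left, norm_smul, Real.norm_eq_abs, abs_of_pos hs₀, mul_comm]
  exact hpk

theorem Convex.isSun {K : Set X} (hK : Convex ℝ K) (hprox : Proximinal K) : IsSun K := by
  intro x hx
  obtain ⟨p, hp⟩ := hprox x hx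
  refine ⟨p, hp, fun t ht => ?_⟩
  have hray : x + (t / ‖x - p‖) • (x - p) = p + (1 + t / ‖x - p‖) • (x - p) := by module
  rw [hray]
  exact hK.add_smul_mem_nearPts hp (le_add_of_nonneg_right (by positivity))

theorem IsSun.almostSun {K : Set X} (h : IsSun K) : AlmostSun K :=
  fun x hx => subset_closure ⟨hx, h x hx⟩

theorem IsSunAt.notMem_ball {K : Set X} {z p k : X} (h : IsSunAt K z p) (hzp : z ≠ p)
    (hk : k ∈ K) {s : ℝ} (hs : ‖z - p‖ ≤ s) : k ∉ ball (p + (s / ‖z - p‖) • (z - p)) s := by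
  have hd : ‖z - p‖ ≠ 0 := norm_ne_zero_iff.2 (sub_ne_zero.2 hzp)
  have hnear := h.2 (s - ‖z - p‖) (sub_nonneg.2 hs)
  have hray : z + ((s - ‖z - p‖) / ‖z - p‖) • (z - p) = p + (s / ‖z - p‖) • (z - p) := by
    match_scalars <;> field_simp <;> ring
  rw [hray, mem_nearPts_iff] at hnear
  have hps : ‖p + (s / ‖z - p‖) • (z - p) - p‖ = s := by
    rw [add_sub_cancel_left, norm_smul, Real.norm_eq_abs,
      abs_of_nonneg (div_nonneg ((norm_nonneg _).trans hs) (norm_nonneg _)), div_mul_cancel₀ _ hd]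
  rw [mem_ball, dist_comm, dist_eq_norm, not_lt]
  linarith [hnear.2 k hk]

theorem sameRay_of_apply_eq_norm [StrictConvexSpace ℝ (StrongDual ℝ X)] {u : X} (hu : ‖u‖ = 1)
    {f g : StrongDual ℝ X} (hf : f u = ‖f‖) (hg : g u = ‖g‖) : SameRay ℝ f g := by
  refine sameRay_iff_norm_add.2 (le_antisymm (norm_add_le f g) ?_)
  calc ‖f‖ + ‖g‖ = (f + g) u := by rw [add_apply, hf, hg]
    _ ≤ ‖f + g‖ * ‖u‖ := (Real.le_norm_self _).trans ((f + g).le_opNorm u)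
    _ = ‖f + g‖ := by rw [hu, mul_one]

theorem add_mul_norm_le_of_forall_lt_apply_ball {g : StrongDual ℝ X} {c : X} {r a : ℝ}
    (hr : 0 < r) (h : ∀ x ∈ ball c r, a < g x) : a + r * ‖g‖ ≤ g c := by
  have hclosed : ∀ x ∈ closedBall c r, a ≤ g x := by
    rw [← closure_ball c hr.ne']
    exact closure_minimal (fun x hx => (h x hx).le) (isClosed_le continuous_const g.continuous)
  have hnorm : ‖g‖ ≤ (g c - a) / r := by
    refine ContinuousLinearMap.opNorm_bound_of_ball_bound hr _ g fun y hy => ?_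
    rw [mem_closedBall_zero_iff] at hy
    have hadd := hclosed (c + y) (by rwa [mem_closedBall, dist_eq_norm, add_sub_cancel_left])
    have hsub := hclosed (c - y) (by rwa [mem_closedBall, dist_eq_norm, sub_sub_cancel_left,
      norm_neg])
    rw [map_add] at hadd
    rw [map_sub] at hsub
    rw [Real.norm_eq_abs, abs_le]
    constructor <;> linarith
  rw [le_div_iff₀ hr] at hnorm
  linarith

theorem apply_le_of_forall_notMem_ball [StrictConvexSpace ℝ (StrongDual ℝ X)] {u p k : X}
    {d : ℝ} {f : StrongDual ℝ X} (hu : ‖u‖ = 1) (hf : f u = ‖f‖) (hd : 0 < d)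
    (hk : ∀ s, d ≤ s → k ∉ ball (p + s • u) s) : f k ≤ f p := by
  set B : ℕ → Set X := fun n => ball (p + (d + n) • u) (d + n)
  have hB : Monotone B := by
    refine monotone_nat_of_le_succ fun n => ball_subset_ball' (le_of_eq ?_)
    rw [dist_eq_norm, show p + (d + n) • u - (p + (d + ↑(n + 1)) • u) = -u by push_cast; module,
      norm_neg, hu]
    push_cast
    ring
  have hkB : k ∉ ⋃ n, B n := by
    simpa only [Set.mem_iUnion, not_exists, B] using
      fun n : ℕ => hk (d + n) (le_add_of_nonneg_right n.cast_nonneg)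
  obtain ⟨g, hg⟩ := geometric_hahn_banach_point_open
    (hB.directed_le.convex_iUnion fun n => convex_ball _ _) (isOpen_iUnion fun n => isOpen_ball) hkB
  have hgB : ∀ n : ℕ, g k + (d + n) * ‖g‖ ≤ g p + (d + n) * g u := fun n => by
    have := add_mul_norm_le_of_forall_lt_apply_ball (by positivity)
      fun x hx => hg x (Set.mem_iUnion.2 ⟨n, hx⟩)
    rwa [map_add, map_smul, smul_eq_mul] at this
  -- otherwise the balls of radius `d + n` would eventually swallow `k`
  have hgu : g u = ‖g‖ := by
    refine le_antisymm ((Real.le_norm_self _).trans (by simpa [hu] using g.le_opNorm u)) ?_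
    by_contra! hlt
    obtain ⟨n, hn⟩ := exists_nat_gt ((g p - g k) / (‖g‖ - g u))
    rw [div_lt_iff₀ (sub_pos.2 hlt)] at hn
    nlinarith [hgB n]
  have hgk : g k ≤ g p := by simpa [hgu] using hgB 0
  have hg₀ : 0 < ‖g‖ := by
    refine norm_pos_iff.2 fun hg₀ => ?_
    simpa [hg₀] using hg (p + d • u) (Set.mem_iUnion.2 ⟨0, by simpa [B] using hd⟩)
  -- rotundity of `X*`: `g` is a positive multiple of `f`
  have hfg := congrArg (fun φ : StrongDual ℝ X => φ p - φ k)
    (sameRay_of_apply_eq_norm hu hf hgu).norm_smul_eq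
  simp only [smul_apply, smul_eq_mul, ← mul_sub] at hfg
  have : 0 ≤ ‖g‖ * (f p - f k) := hfg ▸ mul_nonneg (norm_nonneg f) (sub_nonneg.2 hgk)
  linarith [(mul_nonneg_iff_of_pos_left hg₀).1 this]

theorem IsSunAt.infDist_le_dist_of_mem_convexHull [StrictConvexSpace ℝ (StrongDual ℝ X)]
    {K : Set X} {z p c : X} (h : IsSunAt K z p) (hc : c ∈ convexHull ℝ K) :
    infDist z K ≤ dist z c := by
  rw [← h.1.2]
  rcases eq_or_ne z p with rfl | hzp
  · simp
  set d := ‖z - p‖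
  have hd : 0 < d := norm_pos_iff.2 (sub_ne_zero.2 hzp)
  set u := d⁻¹ • (z - p)
  have hu : ‖u‖ = 1 := by
    simpa [u, norm_smul, abs_of_pos hd] using inv_mul_cancel₀ hd.ne'
  obtain ⟨f, hf, hfu⟩ := exists_dual_vector ℝ u (by simp [hu])
  have hKf : ∀ k ∈ K, f k ≤ f p := fun k hk =>
    apply_le_of_forall_notMem_ball hu (by simp [hfu, hf, hu]) hd fun s hs => by
      rw [smul_smul, ← div_eq_mul_inv]
      exact h.notMem_ball hzp hk hs
  have hcf : f c ≤ f p := convexHull_min hKf (convex_halfSpace_le f.toLinearMap.isLinear _) hc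
  have hfz : f (z - p) = d := by
    rw [show z - p = d • u by simp [u, smul_smul, hd.ne'], map_smul, hfu, hu]
    simp
  calc d = f z - f p := by rw [← hfz, map_sub]
    _ ≤ f (z - c) := by rw [map_sub]; linarith
    _ ≤ ‖f‖ * ‖z - c‖ := (Real.le_norm_self _).trans (f.le_opNorm _)
    _ = dist z c := by rw [hf, one_mul, dist_eq_norm]

theorem AlmostSun.convex [StrictConvexSpace ℝ (StrongDual ℝ X)] {K : Set X} (hcl : IsClosed K)
    (h : AlmostSun K) : Convex ℝ K := by
  refine convexHull_eq_self.1 (subset_antisymm (fun c hc => ?_) (subset_convexHull ℝ K))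
  by_contra hcK
  have hc₀ : infDist c K = 0 := by
    refine le_antisymm (le_of_forall_pos_lt_add fun ε hε => ?_) infDist_nonneg
    obtain ⟨z, ⟨-, p, hp⟩, hcz⟩ := mem_closure_iff.1 (h c hcK) (ε / 2) (half_pos hε)
    calc infDist c K ≤ infDist z K + dist c z := infDist_le_infDist_add_dist
      _ ≤ dist c z + dist c z := by
        gcongr
        exact dist_comm c z ▸ hp.infDist_le_dist_of_mem_convexHull hc
      _ < 0 + ε := by linarith
  have hne : K.Nonempty := convexHull_nonempty_iff.1 ⟨c, hc⟩
  exact hcK (hcl.closure_subset ((mem_closure_iff_infDist_zero hne).2 hc₀))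

end Suns

theorem almostSun_iff_convex_iff_sun_of_rotund_dual_general
    [NormedAddCommGroup X] [NormedSpace ℝ X]
    [StrictConvexSpace ℝ (StrongDual ℝ X)]
    (K : Set X) (hcl : IsClosed K) (hprox : Proximinal K) :
    (AlmostSun K ↔ Convex ℝ K) ∧ (Convex ℝ K ↔ IsSun K) :=
  ⟨⟨AlmostSun.convex hcl, fun h => (h.isSun hprox).almostSun⟩,
    ⟨fun h => h.isSun hprox, fun h => h.almostSun.convex hcl⟩⟩

theorem almostSun_iff_convex_iff_sun_of_rotund_dual
    [NormedAddCommGroup X] [NormedSpace ℝ X] [CompleteSpace X]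
    [StrictConvexSpace ℝ (StrongDual ℝ X)]
    (K : Set X) (hK : K.Nonempty) (hcl : IsClosed K) (hprox : Proximinal K) :
    (AlmostSun K ↔ Convex ℝ K) ∧ (Convex ℝ K ↔ IsSun K) :=
  almostSun_iff_convex_iff_sun_of_rotund_dual_general K hcl hprox
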